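/- The quantum-group boundary projector b has blob weight y = [α+1]_q/[α]_q: on V_α⊗ℂ²⊗ℂ², one has e ∘ (b⊗Id_{ℂ²}) ∘ e = ([α+1]_q/[α]_q) · e, where e acts as the Temperley–Lieb matrix on the two ℂ² factors and as the identity on V_α, and b acts on V_α and the first ℂ² factor. -/

import Mathlib

noncomputable section

/-- The Verma module `V_α`: finitely supported complex sequences, basis `|n⟩`. -/
abbrev Verma : Type := ℕ →₀ ℂ

/-- The basis vector `|n⟩`. -/
noncomputable def ket (n : ℕ) : Verma := Finsupp.single n 1

/-- The linear operator on `Verma` determined by its values on the basis vectors. -/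
noncomputable def ladderOp (t : ℕ → Verma) : Module.End ℂ Verma :=
  Finsupp.lsum ℂ fun n => LinearMap.toSpanSingleton ℂ Verma (t n)

/-- The q-deformed number `[x]_q` with `q = e^h`. -/
noncomputable def qnum (h x : ℂ) : ℂ :=
  (Complex.exp (h * x) - Complex.exp (-(h * x))) / (Complex.exp h - Complex.exp (-h))

/-- `E |n⟩ = [n]_q [α−n]_q |n−1⟩`, `E |0⟩ = 0`. -/
noncomputable def Eop (h α : ℂ) : Module.End ℂ Verma :=
  ladderOp fun n => if n = 0 then 0 else (qnum h n * qnum h (α - n)) • ket (n - 1)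

/-- `F |n⟩ = |n+1⟩`. -/
noncomputable def Fop : Module.End ℂ Verma := ladderOp fun n => ket (n + 1)

/-- `K |n⟩ = q^{α−1−2n} |n⟩`. -/
noncomputable def Kop (h α : ℂ) : Module.End ℂ Verma :=
  ladderOp fun n => Complex.exp (h * (α - 1 - 2 * n)) • ket n

/-- `K⁻¹ |n⟩ = q^{−(α−1−2n)} |n⟩`. -/
noncomputable def Kinv (h α : ℂ) : Module.End ℂ Verma :=
  ladderOp fun n => Complex.exp (-(h * (α - 1 - 2 * n))) • ket n

/-- Operators on `V_α ⊗ ℂ²` as 2×2 matrices with entries in `End(V_α)`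
(rows/columns indexed by the `ℂ²` basis `↑, ↓`). -/
abbrev Op2 : Type := Matrix (Fin 2) (Fin 2) (Module.End ℂ Verma)

/-- The projector `b_+` on the summand `V_{α+1}` of `V_α ⊗ ℂ²`. -/
noncomputable def bPlus (h α : ℂ) : Op2 :=
  (Complex.exp (h * α) - Complex.exp (-(h * α)))⁻¹ •
    !![(-Complex.exp (-h)) • Kinv h α + Complex.exp (h * α) • 1,
        (Complex.exp h - Complex.exp (-h)) • Fop;
        (Complex.exp h * (Complex.exp h - Complex.exp (-h))) • (Kinv h α * Eop h α),
        Complex.exp h • Kinv h α - Complex.exp (-(h * α)) • 1]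

/-- The projector `b_−` on the summand `V_{α-1}` of `V_α ⊗ ℂ²`. -/
noncomputable def bMinus (h α : ℂ) : Op2 :=
  (-(Complex.exp (h * α) - Complex.exp (-(h * α)))⁻¹) •
    !![(-Complex.exp (-h)) • Kinv h α + Complex.exp (-(h * α)) • 1,
        (Complex.exp h - Complex.exp (-h)) • Fop;
        (Complex.exp h * (Complex.exp h - Complex.exp (-h))) • (Kinv h α * Eop h α),
        Complex.exp h • Kinv h α - Complex.exp (h * α) • 1]

/-- The coproduct action `Δ(E) = 1⊗E + E⊗K` on `V_α ⊗ ℂ²`. -/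
noncomputable def coE (h α : ℂ) : Op2 :=
  !![Complex.exp h • Eop h α, 1; 0, Complex.exp (-h) • Eop h α]

/-- The coproduct action `Δ(F) = K⁻¹⊗F + F⊗1` on `V_α ⊗ ℂ²`. -/
noncomputable def coF (h α : ℂ) : Op2 :=
  !![Fop, 0; Kinv h α, Fop]

/-- The coproduct action `Δ(K) = K⊗K` on `V_α ⊗ ℂ²`. -/
noncomputable def coK (h α : ℂ) : Op2 :=
  !![Complex.exp h • Kop h α, 0; 0, Complex.exp (-h) • Kop h α]

/-- The coproduct action `Δ(K⁻¹) = K⁻¹⊗K⁻¹` on `V_α ⊗ ℂ²`. -/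
noncomputable def coKinv (h α : ℂ) : Op2 :=
  !![Complex.exp (-h) • Kinv h α, 0; 0, Complex.exp h • Kinv h α]

/-- Operators on `V_α ⊗ ℂ² ⊗ ℂ²` as matrices with entries in `End(V_α)`, indexed by pairs
(state of the first `ℂ²`, state of the second `ℂ²`). -/
abbrev Op4 : Type := Matrix (Fin 2 × Fin 2) (Fin 2 × Fin 2) (Module.End ℂ Verma)

/-- The Temperley–Lieb matrix on `ℂ² ⊗ ℂ²` (ordered basis ↑↑, ↑↓, ↓↑, ↓↓):
rows (0,0,0,0), (0, q, −1, 0), (0, −1, q⁻¹, 0), (0,0,0,0). -/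
noncomputable def eTL (h : ℂ) : Matrix (Fin 2 × Fin 2) (Fin 2 × Fin 2) ℂ :=
  Matrix.of fun p r =>
    if p = ((0 : Fin 2), (1 : Fin 2)) ∧ r = ((0 : Fin 2), (1 : Fin 2)) then Complex.exp h
    else if p = ((0 : Fin 2), (1 : Fin 2)) ∧ r = ((1 : Fin 2), (0 : Fin 2)) then -1
    else if p = ((1 : Fin 2), (0 : Fin 2)) ∧ r = ((0 : Fin 2), (1 : Fin 2)) then -1
    else if p = ((1 : Fin 2), (0 : Fin 2)) ∧ r = ((1 : Fin 2), (0 : Fin 2)) then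
      Complex.exp (-h)
    else 0

/-- `e` acting on the two `ℂ²` factors of `V_α ⊗ ℂ² ⊗ ℂ²`, identity on `V_α`. -/
noncomputable def eOp4 (h : ℂ) : Op4 :=
  Matrix.of fun p r => eTL h p r • (1 : Module.End ℂ Verma)

/-- `b ⊗ Id_{ℂ²}`: the boundary projector acting on `V_α` and the first `ℂ²` factor. -/
noncomputable def bFst (h α : ℂ) : Op4 :=
  Matrix.of fun p r => if p.2 = r.2 then bPlus h α p.1 r.1 else 0

/-! The Temperley–Lieb generator has rank one: `e = |cup⟩⟨cap|` with `cup = q |↑↓⟩ − |↓↑⟩` and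
`cap = ⟨↑↓| − q⁻¹ ⟨↓↑|`, so `e X e = ⟨cap| X |cup⟩ e` for every operator `X`. For `X = b ⊗ Id` the
pairing is `q b↑↑ + q⁻¹ b↓↓`, in which the `K⁻¹` terms cancel, leaving the scalar
`(q^{α+1} − q^{−α−1}) / (q^α − q^{−α}) = [α+1]_q / [α]_q`. -/

open Matrix

theorem Matrix.map_vecMulVec_mul_mul_map_vecMulVec {ι R A : Type*} [Fintype ι] [CommSemiring R]
    [Semiring A] [Algebra R A] (v w : ι → R) (M : Matrix ι ι A) :
    (vecMulVec v w).map (algebraMap R A) * M * (vecMulVec v w).map (algebraMap R A) =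
      (∑ i, ∑ k, (w i * v k) • M i k) • (vecMulVec v w).map (algebraMap R A) := by
  have mul_algebraMap (a : A) (x : R) : a * algebraMap R A x = x • a := by
    rw [← Algebra.commutes, Algebra.smul_def]
  ext p r
  simp only [mul_apply, map_apply, vecMulVec_apply, smul_apply, smul_eq_mul, mul_algebraMap,
    ← Algebra.smul_def, Finset.smul_sum, smul_smul]
  rw [Finset.sum_comm]
  refine Finset.sum_congr rfl fun i _ => Finset.sum_congr rfl fun k _ => ?_
  ring_nf

def tlCup (h : ℂ) : Fin 2 × Fin 2 → ℂ := fun p => !![0, Complex.exp h; -1, 0] p.1 p.2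

def tlCap (h : ℂ) : Fin 2 × Fin 2 → ℂ := fun p => !![0, 1; -Complex.exp (-h), 0] p.1 p.2

theorem eTL_eq_vecMulVec (h : ℂ) : eTL h = vecMulVec (tlCup h) (tlCap h) := by
  ext ⟨a, b⟩ ⟨c, d⟩
  fin_cases a <;> fin_cases b <;> fin_cases c <;> fin_cases d <;>
    simp [eTL, tlCup, tlCap, vecMulVec_apply, ← Complex.exp_add]

theorem eOp4_eq_map (h : ℂ) : eOp4 h = (eTL h).map (algebraMap ℂ (Module.End ℂ Verma)) := by
  ext1 p r
  simp [eOp4, Algebra.algebraMap_eq_smul_one]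

theorem sum_tlCap_mul_tlCup_smul_bFst (h α : ℂ) :
    ∑ i, ∑ k, (tlCap h i * tlCup h k) • bFst h α i k =
      Complex.exp h • bPlus h α 0 0 + Complex.exp (-h) • bPlus h α 1 1 := by
  simp [Fintype.sum_prod_type, Fin.sum_univ_two, tlCap, tlCup, bFst]

theorem exp_smul_bPlus_add_exp_neg_smul_bPlus (h α : ℂ) :
    Complex.exp h • bPlus h α 0 0 + Complex.exp (-h) • bPlus h α 1 1 =
      algebraMap ℂ (Module.End ℂ Verma)
        ((Complex.exp (h * (α + 1)) - Complex.exp (-(h * (α + 1)))) /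
          (Complex.exp (h * α) - Complex.exp (-(h * α)))) := by
  simp only [bPlus, Matrix.smul_apply, of_apply, cons_val', cons_val_zero, cons_val_one, empty_val',
    cons_val_fin_one, Algebra.algebraMap_eq_smul_one]
  rw [mul_add, neg_add, Complex.exp_add, Complex.exp_add, mul_one]
  match_scalars <;> ring

theorem qnum_div_qnum (h x y : ℂ) (hq : Complex.exp h ^ 2 ≠ 1) :
    qnum h x / qnum h y =
      (Complex.exp (h * x) - Complex.exp (-(h * x))) /
        (Complex.exp (h * y) - Complex.exp (-(h * y))) := by
  refine div_div_div_cancel_right₀ ?_ _ _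
  rw [Complex.exp_neg, sub_ne_zero]
  contrapose! hq
  rw [sq]
  nth_rewrite 2 [hq]
  exact mul_inv_cancel₀ (Complex.exp_ne_zero h)

theorem blob_weight_of_qgroup_projector_general (h α : ℂ) (hq : Complex.exp h ^ 2 ≠ 1) :
    eOp4 h * bFst h α * eOp4 h = (qnum h (α + 1) / qnum h α) • eOp4 h := by
  rw [eOp4_eq_map, eTL_eq_vecMulVec, map_vecMulVec_mul_mul_map_vecMulVec,
    sum_tlCap_mul_tlCup_smul_bFst, exp_smul_bPlus_add_exp_neg_smul_bPlus, algebraMap_smul,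
    qnum_div_qnum h _ _ hq]

/-- The quantum-group boundary projector `b` has blob weight
`y = [α+1]_q/[α]_q`: on `V_α ⊗ ℂ² ⊗ ℂ²`, `e ∘ (b⊗Id) ∘ e = ([α+1]_q/[α]_q) e`. -/
theorem blob_weight_of_qgroup_projector (h α : ℂ) (hq : Complex.exp h ^ 2 ≠ 1)
    (hα : Complex.exp (h * α) ≠ Complex.exp (-(h * α))) :
    eOp4 h * bFst h α * eOp4 h = (qnum h (α + 1) / qnum h α) • eOp4 h :=
  blob_weight_of_qgroup_projector_general h α hq
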